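/- arXiv:1612.02985 — 3 statements merged into one kernel-verified Lean document; each statement's English description precedes it below -/
import Mathlib

section
/- Assume a trading system with trade results t_1, …, t_N ∈ ℝ \ {0}, at least one of which is negative, maximal loss t̂ := max{|t_i| : t_i < 0} > 0, weights p_i > 0 with Σ_{i=1}^N p_i = 1, and positive expectation Σ_{i=1}^N p_i·t_i > 0. Then there exists a unique f^opt ∈ (0,1) such that Σ_{i=1}^N p_i·log(1 + f^opt·t_i/t̂) ≥ Σ_{i=1}^N p_i·log(1 + f·t_i/t̂) for all f ∈ [0,1); equivalently, the weighted geometric mean Γ(f) := Π_{i=1}^N (1 + f·t_i/t̂)^{p_i} has a unique maximizer on [0,1), lying in (0,1). -/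
/-!
With `c i = t i / t̂ ≥ -1`, the function `G f = ∑ pᵢ log (1 + f cᵢ)` is strictly concave on
`[0, 1)`, has derivative `∑ pᵢ cᵢ > 0` at `0`, and tends to `-∞` as `f → 1⁻` because the worst
trade has `c j = -1`. So `G` attains its maximum on `[0, 1)`, not at `0`, and strict concavity
makes the maximizer unique.
-/

open Set Filter Topology Real

lemma one_add_mul_pos {c f : ℝ} (hc : -1 ≤ c) (hf : f ∈ Ico (0 : ℝ) 1) : 0 < 1 + f * c := by
  nlinarith [hf.1, hf.2]

lemma strictConcaveOn_log_one_add_mul {c : ℝ} (hc : -1 ≤ c) (hc0 : c ≠ 0) :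
    StrictConcaveOn ℝ (Ico 0 1) fun f => log (1 + f * c) := by
  refine ⟨convex_Ico 0 1, fun x hx y hy hxy a b ha hb hab => ?_⟩
  have hne : 1 + x * c ≠ 1 + y * c := by simpa [hc0] using hxy
  convert strictConcaveOn_log_Ioi.2 (one_add_mul_pos hc hx) (one_add_mul_pos hc hy) hne ha hb hab
    using 2
  simp only [smul_eq_mul]
  linear_combination -hab

lemma concaveOn_log_one_add_mul {c : ℝ} (hc : -1 ≤ c) :
    ConcaveOn ℝ (Ico 0 1) fun f => log (1 + f * c) := by
  rcases eq_or_ne c 0 with rfl | hc0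
  · simpa using concaveOn_const 0 (convex_Ico (0 : ℝ) 1)
  · exact (strictConcaveOn_log_one_add_mul hc hc0).concaveOn

lemma exists_isMaxOn_Ico_of_tendsto_atBot {G : ℝ → ℝ} {a b : ℝ} (hab : a < b)
    (hG : ContinuousOn G (Ico a b)) (hlim : Tendsto G (𝓝[<] b) atBot) :
    ∃ x ∈ Ico a b, IsMaxOn G (Ico a b) x := by
  obtain ⟨d, hdb, hd⟩ := (nhdsLT_basis b).eventually_iff.1 (hlim.eventually_lt_atBot (G a))
  have hd' : max a d ∈ Ico a b := ⟨le_max_left a d, max_lt hab hdb⟩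
  obtain ⟨x, hx, hxmax⟩ := isCompact_Icc.exists_isMaxOn (nonempty_Icc.2 hd'.1)
    (hG.mono (Icc_subset_Ico_right hd'.2))
  refine ⟨x, ⟨hx.1, hx.2.trans_lt hd'.2⟩, fun f hf => ?_⟩
  rcases le_or_gt f (max a d) with h | h
  · exact hxmax ⟨hf.1, h⟩
  · exact ((hd ⟨(le_max_right a d).trans_lt h, hf.2⟩).trans_le (hxmax ⟨le_rfl, hd'.1⟩)).le

lemma HasDerivAt.not_isMaxOn_Ico_of_pos {G : ℝ → ℝ} {a b S : ℝ} (hab : a < b)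
    (hG : HasDerivAt G S a) (hS : 0 < S) : ¬ IsMaxOn G (Ico a b) a := by
  intro hmax
  have hslope : ∀ᶠ s in 𝓝[>] 0, 0 < s⁻¹ • (G (a + s) - G a) :=
    hG.tendsto_slope_zero_right.eventually (lt_mem_nhds hS)
  obtain ⟨s, hs_slope, hs⟩ := (hslope.and (Ioo_mem_nhdsGT (sub_pos.2 hab))).exists
  have hGs : G (a + s) ≤ G a := hmax ⟨by linarith [hs.1], by linarith [hs.2]⟩
  have hslope_nonpos : s⁻¹ • (G (a + s) - G a) ≤ 0 :=
    smul_nonpos_of_nonneg_of_nonpos (inv_nonneg.2 hs.1.le) (sub_nonpos.2 hGs)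
  linarith

section WeightedLogReturn

variable {ι : Type*} [Fintype ι] {p c : ι → ℝ}

/-- `c i` plays the role of the normalized trade result `tᵢ / t̂`. -/
noncomputable def weightedLogReturn (p c : ι → ℝ) (f : ℝ) : ℝ :=
  ∑ i, p i * log (1 + f * c i)

lemma continuousOn_weightedLogReturn (hc : ∀ i, -1 ≤ c i) :
    ContinuousOn (weightedLogReturn p c) (Ico 0 1) := by
  refine continuousOn_finsetSum _ fun i _ => continuousOn_const.mul (ContinuousOn.log ?_ ?_)
  · fun_prop
  · exact fun f hf => (one_add_mul_pos (hc i) hf).ne'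

lemma hasDerivAt_weightedLogReturn_zero :
    HasDerivAt (weightedLogReturn p c) (∑ i, p i * c i) 0 := by
  have hterm (i : ι) : HasDerivAt (fun f => p i * log (1 + f * c i)) (p i * c i) 0 := by
    simpa using ((((hasDerivAt_id (0 : ℝ)).mul_const (c i)).const_add 1).log (by simp)).const_mul
      (p i)
  exact HasDerivAt.fun_sum fun i _ => hterm i

lemma strictConcaveOn_weightedLogReturn (hp : ∀ i, 0 < p i) (hc : ∀ i, -1 ≤ c i) {j : ι}
    (hcj : c j ≠ 0) : StrictConcaveOn ℝ (Ico 0 1) (weightedLogReturn p c) := by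
  refine ⟨convex_Ico 0 1, fun x hx y hy hxy a b ha hb hab => ?_⟩
  simp only [weightedLogReturn, smul_eq_mul, Finset.mul_sum, ← Finset.sum_add_distrib]
  refine Finset.sum_lt_sum (fun i _ => ?_) ⟨j, Finset.mem_univ j, ?_⟩
  · have := (concaveOn_log_one_add_mul (hc i)).2 hx hy ha.le hb.le hab
    simp only [smul_eq_mul] at this
    linear_combination mul_le_mul_of_nonneg_left this (hp i).le
  · have := (strictConcaveOn_log_one_add_mul (hc j) hcj).2 hx hy hxy ha hb hab
    simp only [smul_eq_mul] at this
    linear_combination mul_lt_mul_of_pos_left this (hp j)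

lemma tendsto_weightedLogReturn_atBot (hp : ∀ i, 0 < p i) (hc : ∀ i, -1 ≤ c i) {j : ι}
    (hcj : c j = -1) : Tendsto (weightedLogReturn p c) (𝓝[<] 1) atBot := by
  classical
  have hsplit : weightedLogReturn p c = fun f => p j * log (1 + f * c j) +
      ∑ i ∈ Finset.univ.erase j, p i * log (1 + f * c i) := by
    funext f
    exact (Finset.add_sum_erase _ _ (Finset.mem_univ j)).symm
  have hlin : Tendsto (fun f : ℝ => 1 + f * c j) (𝓝[<] 1) (𝓝[>] 0) := by
    refine tendsto_nhdsWithin_of_tendsto_nhds_of_eventually_within _ ?_ ?_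
    · exact ((continuous_const.add (continuous_id.mul continuous_const)).tendsto' 1 0
        (by simp [hcj])).mono_left nhdsWithin_le_nhds
    · filter_upwards [self_mem_nhdsWithin] with f (hf : f < 1)
      simp only [hcj, mem_Ioi]
      linarith
  have hbound : ∀ᶠ f in 𝓝[<] (1 : ℝ),
      ∑ i ∈ Finset.univ.erase j, p i * log (1 + f * c i) ≤ ∑ i, p i * |c i| := by
    filter_upwards [Ioo_mem_nhdsLT zero_lt_one] with f hf
    have hterm : ∀ i, log (1 + f * c i) ≤ |c i| := fun i =>
      (log_le_sub_one_of_pos (one_add_mul_pos (hc i) (Ioo_subset_Ico_self hf))).trans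
        (by nlinarith [hf.1, hf.2, le_abs_self (c i), abs_nonneg (c i)])
    calc ∑ i ∈ Finset.univ.erase j, p i * log (1 + f * c i)
        ≤ ∑ i ∈ Finset.univ.erase j, p i * |c i| :=
          Finset.sum_le_sum fun i _ => mul_le_mul_of_nonneg_left (hterm i) (hp i).le
      _ ≤ ∑ i, p i * |c i| := Finset.sum_le_sum_of_subset_of_nonneg (Finset.erase_subset _ _)
          fun i _ _ => mul_nonneg (hp i).le (abs_nonneg _)
  rw [hsplit]
  exact tendsto_atBot_add_right_of_ge' _ _
    ((tendsto_log_nhdsGT_zero.comp hlin).const_mul_atBot (hp j)) hbound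

theorem existsUnique_isMaxOn_weightedLogReturn (hp : ∀ i, 0 < p i) (hc : ∀ i, -1 ≤ c i)
    {j : ι} (hcj : c j = -1) (hS : 0 < ∑ i, p i * c i) :
    ∃! f, f ∈ Ioo (0 : ℝ) 1 ∧ IsMaxOn (weightedLogReturn p c) (Ico 0 1) f := by
  obtain ⟨x, hx, hmax⟩ := exists_isMaxOn_Ico_of_tendsto_atBot one_pos
    (continuousOn_weightedLogReturn hc) (tendsto_weightedLogReturn_atBot hp hc hcj)
  have hx0 : x ≠ 0 := by
    rintro rfl
    exact hasDerivAt_weightedLogReturn_zero.not_isMaxOn_Ico_of_pos one_pos hS hmax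
  refine ⟨x, ⟨⟨hx.1.lt_of_ne' hx0, hx.2⟩, hmax⟩, fun y ⟨hy, hymax⟩ => ?_⟩
  exact (strictConcaveOn_weightedLogReturn hp hc (hcj ▸ neg_one_lt_zero.ne)).eq_of_isMaxOn
    hymax hmax (Ioo_subset_Ico_self hy) hx

end WeightedLogReturn

theorem stmt_2_general (N : ℕ) (t : Fin N → ℝ) (that : ℝ)
    (hthat : IsGreatest {x : ℝ | ∃ i, t i < 0 ∧ x = |t i|} that)
    (p : Fin N → ℝ) (hp : ∀ i, 0 < p i)
    (hprof : 0 < ∑ i, p i * t i) :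
    ∃! fopt : ℝ, fopt ∈ Set.Ioo (0 : ℝ) 1 ∧
      ∀ f ∈ Set.Ico (0 : ℝ) 1,
        ∑ i, p i * Real.log (1 + f * t i / that)
          ≤ ∑ i, p i * Real.log (1 + fopt * t i / that) := by
  obtain ⟨⟨j, htj, hj⟩, hle⟩ := hthat
  have hthat_pos : 0 < that := hj ▸ abs_pos.2 htj.ne
  have hc : ∀ i, -1 ≤ t i / that := by
    intro i
    rw [le_div_iff₀ hthat_pos]
    rcases lt_or_ge (t i) 0 with h | h
    · linarith [hle ⟨i, h, rfl⟩, neg_abs_le (t i)]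
    · linarith
  have hcj : t j / that = -1 := by rw [hj, abs_of_neg htj, div_neg_self htj.ne]
  have hS : 0 < ∑ i, p i * (t i / that) := by
    simp only [← mul_div_assoc, ← Finset.sum_div]
    positivity
  simpa only [mul_div_assoc, isMaxOn_iff, weightedLogReturn] using
    existsUnique_isMaxOn_weightedLogReturn hp hc hcj hS

/-- Optimal f with probability weights: there is a unique `f^opt ∈ (0,1)` maximizing
`∑ pᵢ·log(1 + f·tᵢ/t̂)` (equivalently the weighted geometric mean `Γ`) over `[0,1)`. -/
theorem stmt_2 (N : ℕ) (hN : 1 ≤ N) (t : Fin N → ℝ) (ht : ∀ i, t i ≠ 0)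
    (hneg : ∃ i, t i < 0) (that : ℝ)
    (hthat : IsGreatest {x : ℝ | ∃ i, t i < 0 ∧ x = |t i|} that)
    (hthat_pos : 0 < that)
    (p : Fin N → ℝ) (hp : ∀ i, 0 < p i) (hpsum : ∑ i, p i = 1)
    (hprof : 0 < ∑ i, p i * t i) :
    ∃! fopt : ℝ, fopt ∈ Set.Ioo (0 : ℝ) 1 ∧
      ∀ f ∈ Set.Ico (0 : ℝ) 1,
        ∑ i, p i * Real.log (1 + f * t i / that)
          ≤ ∑ i, p i * Real.log (1 + fopt * t i / that) :=
  stmt_2_general N t that hthat p hp hprof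
end

section
/- There exists ε > 0 such that for all f ∈ (0, ε): E(Dcur^(M)(f,·)) = Σ_{n=1}^N (Σ_{ℓ=0}^M Λ_n^{(ℓ,M,N)})·log(1 + f·t_n/t̂), where Λ_n^{(M,M,N)} := 0 and, for ℓ ∈ {0,1,…,M−1}, Λ_n^{(ℓ,M,N)} := Σ P({ω})·#{i ≥ ℓ+1 : ω_i = n} ≥ 0, the sum running over all ω ∈ Ω^(M) satisfying Σ_{j=k}^ℓ t_{ω_j} > 0 for every k = 1,…,ℓ and Σ_{j=ℓ+1}^{k̃} t_{ω_j} ≤ 0 for every k̃ = ℓ+1,…,M. -/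
/-!
Write `x_j = t_{ω_j}`. To first order in `f`, the suffix product `∏_{j ≥ ℓ} (1 + f x_j / t̂)`
is `1 + (f / t̂) ∑_{j ≥ ℓ} x_j`, and the index `ℓ = M` (the empty product) accounts for the
`min 1`. So for small `f > 0` the minimum over `ℓ ∈ {0, …, M}` is attained at the first index
`L(ω)` minimizing the suffix sums, i.e. where the run-up of the equity curve ends: the blocks
before `L(ω)` have positive sum, so their product exceeds `1` for small `f`, and the blocks after
`L(ω)` have nonpositive sum, so their product is at most `1` because `1 + y ≤ exp y`. Hence
`Dcur(f, ω) = ∑_{j ≥ L(ω)} log (1 + f x_j / t̂)` for all small `f` (there are finitely many `ω`),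
and grouping the paths `ω` according to `L(ω) = ℓ` and counting the trades equal to `n` after `ℓ`
produces the weights `Λ_n^{(ℓ)}`.
-/

open scoped Classical

open Finset Filter Topology

theorem prod_one_add_mul_le_one {ι : Type*} (s : Finset ι) (a : ι → ℝ) {f : ℝ} (hf : 0 ≤ f)
    (hpos : ∀ i ∈ s, 0 ≤ 1 + f * a i) (hsum : ∑ i ∈ s, a i ≤ 0) :
    ∏ i ∈ s, (1 + f * a i) ≤ 1 :=
  calc ∏ i ∈ s, (1 + f * a i) ≤ ∏ i ∈ s, Real.exp (f * a i) :=
        prod_le_prod hpos fun i _ => by linarith [Real.add_one_le_exp (f * a i)]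
    _ = Real.exp (f * ∑ i ∈ s, a i) := by rw [← Real.exp_sum, mul_sum]
    _ ≤ 1 := Real.exp_le_one_iff.2 (mul_nonpos_of_nonneg_of_nonpos hf hsum)

theorem eventually_one_lt_prod_one_add_mul {ι : Type*} (s : Finset ι) (a : ι → ℝ)
    (hsum : 0 < ∑ i ∈ s, a i) : ∀ᶠ f in 𝓝[>] 0, 1 < ∏ i ∈ s, (1 + f * a i) := by
  have hderiv : HasDerivAt (fun f => ∏ i ∈ s, (1 + f * a i)) (∑ i ∈ s, a i) 0 := by
    simpa using HasDerivAt.fun_finsetProd (u := s) (x := (0 : ℝ))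
      fun i _ => ((hasDerivAt_id 0).mul_const (a i)).const_add 1
  filter_upwards [nhdsGT_le_nhdsNE 0 (hderiv.tendsto_slope.eventually (eventually_gt_nhds hsum)),
    self_mem_nhdsWithin] with f hslope hf
  simpa using (slope_pos_iff hf).1 hslope

theorem sum_card_filter_nsmul {ι κ α : Type*} [Fintype κ] [DecidableEq κ] [AddCommMonoid α]
    (s : Finset ι) (ω : ι → κ) (g : κ → α) :
    ∑ n, #{i ∈ s | ω i = n} • g n = ∑ i ∈ s, g (ω i) := by
  rw [← sum_fiberwise s ω (fun i => g (ω i))]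
  refine sum_congr rfl fun n _ => ?_
  rw [sum_congr rfl fun i hi => by rw [(mem_filter.1 hi).2], sum_const]

theorem inf'_min_one_eq_of_forall_le {M : ℕ} (H : (univ : Finset (Fin M)).Nonempty)
    (R : ℕ → ℝ) {L : ℕ} (hL : L ≤ M) (hRM : R M = 1) (hmin : ∀ ℓ ≤ M, R L ≤ R ℓ) :
    univ.inf' H (fun ℓ : Fin M => min 1 (R ℓ)) = R L := by
  have hRL : R L ≤ 1 := hRM ▸ hmin M le_rfl
  refine le_antisymm ?_ (le_inf' _ _ fun ℓ _ => le_min hRL (hmin ℓ ℓ.2.le))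
  rcases hL.lt_or_eq with h | rfl
  · exact (inf'_le _ (mem_univ ⟨L, h⟩)).trans (min_le_right _ _)
  · obtain ⟨ℓ, -⟩ := H
    exact (inf'_le _ (mem_univ ℓ)).trans (hRM ▸ min_le_left _ _)

section SuffixSums

variable {M : ℕ}

@[to_additive]
theorem prod_block_mul_prod_suffix {α : Type*} [CommMonoid α] (g : Fin M → α) {a b : ℕ}
    (hab : a ≤ b) :
    (∏ j with a ≤ j.1 ∧ j.1 < b, g j) * ∏ j with b ≤ j.1, g j = ∏ j with a ≤ j.1, g j := by
  rw [← prod_filter_mul_prod_filter_not (univ.filter fun j : Fin M => a ≤ j.1) (fun j => j.1 < b),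
    filter_filter, filter_filter]
  congr 2
  ext j
  simp only [mem_filter, mem_univ, true_and]
  omega

noncomputable def suffixSum (x : Fin M → ℝ) (k : ℕ) : ℝ := ∑ j with k ≤ j.1, x j

theorem sum_block_eq_sub (x : Fin M → ℝ) {a b : ℕ} (hab : a ≤ b) :
    ∑ j with a ≤ j.1 ∧ j.1 < b, x j = suffixSum x a - suffixSum x b := by
  rw [suffixSum, suffixSum, ← sum_block_add_sum_suffix x hab, add_sub_cancel_right]

theorem exists_le_forall_suffixSum_le (x : Fin M → ℝ) :
    ∃ L, L ≤ M ∧ ∀ k ≤ M, suffixSum x L ≤ suffixSum x k := by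
  obtain ⟨L, hL, hmin⟩ := exists_min_image (range (M + 1)) (suffixSum x) nonempty_range_add_one
  exact ⟨L, Nat.lt_succ_iff.1 (mem_range.1 hL), fun k hk => hmin k (mem_range.2 (by omega))⟩

/-- The first time the cumulative sum `k ↦ ∑_{j<k} x j` attains its maximum over `k ≤ M`:
minimizing the suffix sums is the same as maximizing the prefix sums. -/
noncomputable def peakIndex (x : Fin M → ℝ) : ℕ := Nat.find (exists_le_forall_suffixSum_le x)

theorem peakIndex_le (x : Fin M → ℝ) : peakIndex x ≤ M :=
  (Nat.find_spec (exists_le_forall_suffixSum_le x)).1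

theorem suffixSum_peakIndex_le (x : Fin M → ℝ) {k : ℕ} (hk : k ≤ M) :
    suffixSum x (peakIndex x) ≤ suffixSum x k :=
  (Nat.find_spec (exists_le_forall_suffixSum_le x)).2 k hk

theorem suffixSum_peakIndex_lt (x : Fin M → ℝ) {k : ℕ} (hk : k < peakIndex x) :
    suffixSum x (peakIndex x) < suffixSum x k := by
  have hkM : k ≤ M := hk.le.trans (peakIndex_le x)
  refine (suffixSum_peakIndex_le x hkM).lt_of_ne fun heq => ?_
  refine Nat.find_min (exists_le_forall_suffixSum_le x) hk ⟨hkM, fun k' hk' => ?_⟩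
  exact heq ▸ suffixSum_peakIndex_le x hk'

theorem eq_peakIndex_iff (x : Fin M → ℝ) {ℓ : ℕ} (hℓ : ℓ ≤ M) :
    ((∀ k < ℓ, suffixSum x ℓ < suffixSum x k) ∧
      ∀ k, ℓ < k → k ≤ M → suffixSum x ℓ ≤ suffixSum x k) ↔ ℓ = peakIndex x := by
  constructor
  · rintro ⟨hfirst, hmin⟩
    by_contra hne
    rcases Nat.lt_or_gt_of_ne hne with h | h
    · exact (suffixSum_peakIndex_lt x h).not_ge (hmin _ h (peakIndex_le x))
    · exact (hfirst _ h).not_ge (suffixSum_peakIndex_le x hℓ)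
  · rintro rfl
    exact ⟨fun k hk => suffixSum_peakIndex_lt x hk, fun k _ hk => suffixSum_peakIndex_le x hk⟩

def RunUpEndsAt (x : Fin M → ℝ) (ℓ : ℕ) : Prop :=
  (∀ k < ℓ, 0 < ∑ j with k ≤ j.1 ∧ j.1 < ℓ, x j) ∧
    ∀ k, ℓ ≤ k → k < M → ∑ j with ℓ ≤ j.1 ∧ j.1 ≤ k, x j ≤ 0

theorem runUpEndsAt_iff (x : Fin M → ℝ) {ℓ : ℕ} (hℓ : ℓ ≤ M) :
    RunUpEndsAt x ℓ ↔ ℓ = peakIndex x := by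
  have hclosed (k : ℕ) (hk : ℓ ≤ k) :
      ∑ j with ℓ ≤ j.1 ∧ j.1 ≤ k, x j ≤ 0 ↔ suffixSum x ℓ ≤ suffixSum x (k + 1) := by
    rw [filter_congr fun j _ => and_congr_right' Nat.lt_succ_iff.symm,
      sum_block_eq_sub x (by omega), sub_nonpos]
  rw [RunUpEndsAt, ← eq_peakIndex_iff x hℓ]
  refine and_congr (forall₂_congr fun k hk => by rw [sum_block_eq_sub x hk.le, sub_pos]) ?_
  refine ⟨fun h k hk hkM => ?_, fun h k hk hkM => (hclosed k hk).2 (h _ (by omega) hkM)⟩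
  obtain ⟨k, rfl⟩ := Nat.exists_eq_add_of_lt hk
  exact (hclosed _ (by omega)).1 (h _ (by omega) hkM)

theorem sum_range_sum_runUpEndsAt {α ι : Type*} [AddCommMonoid α] [Fintype ι]
    (x : ι → Fin M → ℝ) (F : ℕ → ι → α) :
    ∑ ℓ ∈ range (M + 1), ∑ ω with RunUpEndsAt (x ω) ℓ, F ℓ ω = ∑ ω, F (peakIndex (x ω)) ω := by
  simp_rw [sum_filter]
  rw [sum_comm]
  refine sum_congr rfl fun ω _ => ?_
  rw [sum_congr rfl fun ℓ hℓ =>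
    if_congr (runUpEndsAt_iff (x ω) (Nat.lt_succ_iff.1 (mem_range.1 hℓ))) rfl rfl, sum_ite_eq',
    if_pos (mem_range.2 (Nat.lt_succ_of_le (peakIndex_le _)))]

theorem sum_sum_range_mul_eq_sum_peakIndex {N : ℕ} (t : Fin N → ℝ)
    (P : (Fin M → Fin N) → ℝ) (Λ : Fin N → ℕ → ℝ)
    (hΛ : ∀ n, ∀ ℓ ∈ range (M + 1), Λ n ℓ =
      ∑ ω : Fin M → Fin N with RunUpEndsAt (fun j => t (ω j)) ℓ,
        P ω * (#{i | ℓ ≤ i.1 ∧ ω i = n} : ℝ))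
    (g : Fin N → ℝ) :
    ∑ n, (∑ ℓ ∈ range (M + 1), Λ n ℓ) * g n =
      ∑ ω, P ω * ∑ j with peakIndex (fun j => t (ω j)) ≤ j.1, g (ω j) := by
  rw [← sum_range_sum_runUpEndsAt (fun ω j => t (ω j))
    fun ℓ ω => P ω * ∑ j with ℓ ≤ j.1, g (ω j)]
  simp_rw [sum_mul]
  rw [sum_comm]
  refine sum_congr rfl fun ℓ hℓ => ?_
  simp_rw [hΛ _ ℓ hℓ, sum_mul]
  rw [sum_comm]
  refine sum_congr rfl fun ω _ => ?_
  have hfiber := sum_card_filter_nsmul (univ.filter fun i : Fin M => ℓ ≤ i.1) ω g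
  simp only [filter_filter, nsmul_eq_mul] at hfiber
  rw [← hfiber, mul_sum]
  exact sum_congr rfl fun n _ => mul_assoc _ _ _

theorem eventually_pos_and_prod_peakIndex_le (x : Fin M → ℝ) :
    ∀ᶠ f in 𝓝[>] 0, (∀ j, 0 < 1 + f * x j) ∧ ∀ ℓ ≤ M,
      ∏ j with peakIndex x ≤ j.1, (1 + f * x j) ≤ ∏ j with ℓ ≤ j.1, (1 + f * x j) := by
  set L := peakIndex x
  have hpos : ∀ᶠ f in 𝓝 0, ∀ j, 0 < 1 + f * x j := eventually_all.2 fun j =>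
    continuousAt_const.eventually_lt (by fun_prop) (by simp)
  have hrunup : ∀ᶠ f in 𝓝[>] 0, ∀ k ∈ range L, 1 < ∏ j with k ≤ j.1 ∧ j.1 < L, (1 + f * x j) :=
    (eventually_all_finset _).2 fun k hk => eventually_one_lt_prod_one_add_mul _ _ <| by
      rw [sum_block_eq_sub x (mem_range.1 hk).le, sub_pos]
      exact suffixSum_peakIndex_lt x (mem_range.1 hk)
  filter_upwards [nhdsWithin_le_nhds hpos, hrunup, self_mem_nhdsWithin] with f hpos hrunup hf
  refine ⟨hpos, fun ℓ hℓ => ?_⟩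
  have hnonneg (s : Finset (Fin M)) : 0 ≤ ∏ j ∈ s, (1 + f * x j) :=
    prod_nonneg fun j _ => (hpos j).le
  rcases lt_trichotomy ℓ L with h | rfl | h
  · rw [← prod_block_mul_prod_suffix _ h.le]
    exact le_mul_of_one_le_left (hnonneg _) (hrunup ℓ (mem_range.2 h)).le
  · exact le_rfl
  · rw [← prod_block_mul_prod_suffix _ h.le]
    refine mul_le_of_le_one_left (hnonneg _) (prod_one_add_mul_le_one _ _ hf.le
      (fun j _ => (hpos j).le) ?_)
    rw [sum_block_eq_sub x h.le, sub_nonpos]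
    exact suffixSum_peakIndex_le x hℓ

theorem eventually_log_inf'_min_one_prod (x : Fin M → ℝ) (H : (univ : Finset (Fin M)).Nonempty) :
    ∀ᶠ f in 𝓝[>] 0,
      Real.log (univ.inf' H fun ℓ => min 1 (∏ j with ℓ ≤ j, (1 + f * x j))) =
        ∑ j with peakIndex x ≤ j.1, Real.log (1 + f * x j) := by
  filter_upwards [eventually_pos_and_prod_peakIndex_le x] with f ⟨hpos, hmin⟩
  simp only [Fin.le_def]
  rw [inf'_min_one_eq_of_forall_le H (fun ℓ => ∏ j with ℓ ≤ j.1, (1 + f * x j)) (peakIndex_le x)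
    (prod_eq_one fun j hj => absurd (mem_filter.1 hj).2 (not_le.2 j.2)) hmin,
    Real.log_prod fun j _ => (hpos j).ne']

end SuffixSums

theorem stmt_12_general (N : ℕ) (t : Fin N → ℝ) (that : ℝ)
    (hthat_pos : 0 < that)
    (p : Fin N → ℝ)
    (M : ℕ) (hM : 1 ≤ M)
    (Λ : Fin N → ℕ → ℝ)
    (hΛ : ∀ n : Fin N, ∀ ℓ < M, Λ n ℓ =
      ∑ ω ∈ Finset.univ.filter (fun ω : Fin M → Fin N =>
          (∀ k < ℓ, 0 < ∑ j ∈ Finset.univ.filter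
              (fun j : Fin M => k ≤ j.1 ∧ j.1 < ℓ), t (ω j)) ∧
          (∀ k, ℓ ≤ k → k < M → (∑ j ∈ Finset.univ.filter
              (fun j : Fin M => ℓ ≤ j.1 ∧ j.1 ≤ k), t (ω j)) ≤ 0)),
        (∏ j, p (ω j)) *
          ((Finset.univ.filter (fun i : Fin M => ℓ ≤ i.1 ∧ ω i = n)).card : ℝ))
    (hΛM : ∀ n : Fin N, Λ n M = 0) :
    ∃ ε > 0, ∀ f : ℝ, 0 < f → f < ε →
      ∑ ω : Fin M → Fin N, (∏ j, p (ω j)) *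
        Real.log ((Finset.univ : Finset (Fin M)).inf'
          (Finset.univ_nonempty_iff.mpr (Fin.pos_iff_nonempty.mp hM))
          (fun ℓ => min 1 (∏ j ∈ Finset.univ.filter (fun j : Fin M => ℓ ≤ j),
            (1 + f * t (ω j) / that))))
      = ∑ n, (∑ ℓ ∈ Finset.range (M + 1), Λ n ℓ) * Real.log (1 + f * t n / that) := by
  have hpath (ω : Fin M → Fin N) : ∀ᶠ f in 𝓝[>] 0,
      Real.log (univ.inf' (univ_nonempty_iff.mpr (Fin.pos_iff_nonempty.mp hM))
        fun ℓ => min 1 (∏ j with ℓ ≤ j, (1 + f * t (ω j) / that))) =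
      ∑ j with peakIndex (fun j => t (ω j)) ≤ j.1, Real.log (1 + f * t (ω j) / that) := by
    filter_upwards [eventually_nhdsGT_zero_mul_left (inv_pos.2 hthat_pos)
      (eventually_log_inf'_min_one_prod (fun j => t (ω j)) _)] with f hf
    simpa only [inv_mul_eq_div, div_mul_eq_mul_div] using hf
  obtain ⟨ε, hε, hsmall⟩ := mem_nhdsGT_iff_exists_Ioo_subset.1 (eventually_all.2 hpath)
  refine ⟨ε, hε, fun f hf0 hfε => ?_⟩
  have hΛ' (n : Fin N) (ℓ : ℕ) (hℓ : ℓ ∈ range (M + 1)) : Λ n ℓ =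
      ∑ ω : Fin M → Fin N with RunUpEndsAt (fun j => t (ω j)) ℓ,
        (∏ j, p (ω j)) * (#{i | ℓ ≤ i.1 ∧ ω i = n} : ℝ) := by
    rcases (Nat.lt_succ_iff.1 (mem_range.1 hℓ)).lt_or_eq with h | rfl
    · exact (hΛ n ℓ h).trans (sum_congr (filter_congr fun _ _ => Iff.rfl) fun _ _ => rfl)
    · refine (hΛM n).trans (sum_eq_zero fun ω _ => ?_).symm
      rw [filter_eq_empty_iff.2 fun i _ h => (not_le.2 i.2) h.1]
      simp
  rw [sum_congr rfl fun ω _ => congrArg _ (hsmall ⟨hf0, hfε⟩ ω),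
    sum_sum_range_mul_eq_sum_peakIndex t _ Λ hΛ']

/-- For sufficiently small `f > 0`,
`E(Dcur^(M)(f,·)) = ∑ₙ (∑_{ℓ=0}^M Λₙ^{(ℓ,M,N)})·log(1 + f·tₙ/t̂)`, where `Λₙ^{(M,M,N)} = 0`
and for `ℓ ∈ {0,…,M-1}`, `Λₙ^{(ℓ,M,N)}` sums `P({ω})·#{i ≥ ℓ+1 : ωᵢ = n}` over the `ω`
whose run-up tops exactly after `ℓ` trades (indices here are 0-based: the 1-based
conditions `∑_{j=k}^ℓ t_{ω_j} > 0` for `k = 1,…,ℓ` and `∑_{j=ℓ+1}^{k̃} t_{ω_j} ≤ 0`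
for `k̃ = ℓ+1,…,M` become conditions on 0-based positions `j.1 ∈ {0,…,M-1}`). -/
theorem stmt_12 (N : ℕ) (hN : 1 ≤ N) (t : Fin N → ℝ) (ht : ∀ i, t i ≠ 0)
    (hneg : ∃ i, t i < 0) (that : ℝ)
    (hthat : IsGreatest {x : ℝ | ∃ i, t i < 0 ∧ x = |t i|} that)
    (hthat_pos : 0 < that)
    (p : Fin N → ℝ) (hp : ∀ i, 0 < p i) (hpsum : ∑ i, p i = 1)
    (M : ℕ) (hM : 1 ≤ M)
    (Λ : Fin N → ℕ → ℝ)
    (hΛ : ∀ n : Fin N, ∀ ℓ < M, Λ n ℓ =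
      ∑ ω ∈ Finset.univ.filter (fun ω : Fin M → Fin N =>
          (∀ k < ℓ, 0 < ∑ j ∈ Finset.univ.filter
              (fun j : Fin M => k ≤ j.1 ∧ j.1 < ℓ), t (ω j)) ∧
          (∀ k, ℓ ≤ k → k < M → (∑ j ∈ Finset.univ.filter
              (fun j : Fin M => ℓ ≤ j.1 ∧ j.1 ≤ k), t (ω j)) ≤ 0)),
        (∏ j, p (ω j)) *
          ((Finset.univ.filter (fun i : Fin M => ℓ ≤ i.1 ∧ ω i = n)).card : ℝ))
    (hΛM : ∀ n : Fin N, Λ n M = 0) :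
    ∃ ε > 0, ∀ f : ℝ, 0 < f → f < ε →
      ∑ ω : Fin M → Fin N, (∏ j, p (ω j)) *
        Real.log ((Finset.univ : Finset (Fin M)).inf'
          (Finset.univ_nonempty_iff.mpr (Fin.pos_iff_nonempty.mp hM))
          (fun ℓ => min 1 (∏ j ∈ Finset.univ.filter (fun j : Fin M => ℓ ≤ j),
            (1 + f * t (ω j) / that))))
      = ∑ n, (∑ ℓ ∈ Finset.range (M + 1), Λ n ℓ) * Real.log (1 + f * t n / that) :=
  stmt_12_general N t that hthat_pos p M hM Λ hΛ hΛM
end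

section
/- There exists ε > 0 such that for all f ∈ (0, ε): E(R^(M)(f,·)) = Σ_{n=1}^N (Σ_{ℓ=0}^M R_n^{(ℓ,M,N)})·log(1 + f·t_n/t̂), where R_n^{(0,M,N)} := 0 and, for ℓ ∈ {1,…,M}, R_n^{(ℓ,M,N)} := Σ P({ω})·#{i ≤ ℓ : ω_i = n} ≥ 0, the sum running over all ω ∈ Ω^(M) satisfying Σ_{j=k}^ℓ t_{ω_j} > 0 for every k = 1,…,ℓ and Σ_{j=ℓ+1}^{k̃} t_{ω_j} ≤ 0 for every k̃ = ℓ+1,…,M. -/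
/-!
Along a path `ω`, put `L m = ∑_{j<m} log (1 + f t_{ω_j} / t̂)`; the run-up is `max_{m ≤ M} L m`
(with `L 0 = 0`). As `f → 0⁺`, a segment sum `∑ log (1 + f c_j)` is positive whenever `∑ c_j` is
(its derivative at `0` is `∑ c_j`), and it is `≤ 0` whenever `∑ c_j ≤ 0`, by `log x ≤ x - 1`. So the
first maximiser `ℓ(ω)` of the partial sums of the trades also maximises `L`, and the run-up is
`L ℓ(ω)`. Only finitely many paths and segments occur, so one `ε` serves them all; grouping the
paths by `ℓ(ω)` and the trades before `ℓ(ω)` by their outcome `n` gives the formula.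
-/

open scoped Classical

open Finset Filter Real
open scoped Topology

def IsFirstMaxOn (S : ℕ → ℝ) (M ℓ : ℕ) : Prop :=
  ℓ ≤ M ∧ (∀ k < ℓ, S k < S ℓ) ∧ ∀ m, ℓ < m → m ≤ M → S m ≤ S ℓ

namespace IsFirstMaxOn

variable {S : ℕ → ℝ} {M ℓ : ℕ}

theorem le (h : IsFirstMaxOn S M ℓ) {m : ℕ} (hm : m ≤ M) : S m ≤ S ℓ := by
  rcases lt_trichotomy m ℓ with hlt | rfl | hgt
  exacts [(h.2.1 m hlt).le, le_rfl, h.2.2 m hgt hm]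

theorem unique {ℓ' : ℕ} (h : IsFirstMaxOn S M ℓ) (h' : IsFirstMaxOn S M ℓ') : ℓ = ℓ' := by
  by_contra hne
  rcases Nat.lt_or_gt_of_ne hne with hlt | hlt
  · exact (h'.2.1 ℓ hlt).not_ge (h.le h'.1)
  · exact (h.2.1 ℓ' hlt).not_ge (h'.le h.1)

end IsFirstMaxOn

theorem exists_isFirstMaxOn (S : ℕ → ℝ) (M : ℕ) : ∃ ℓ, IsFirstMaxOn S M ℓ := by
  have hex : ∃ ℓ, ℓ ≤ M ∧ ∀ m ≤ M, S m ≤ S ℓ := by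
    obtain ⟨ℓ, hℓ, hmax⟩ := (range (M + 1)).exists_max_image S ⟨0, by simp⟩
    exact ⟨ℓ, Nat.lt_succ_iff.1 (mem_range.1 hℓ),
      fun m hm => hmax m (mem_range.2 (Nat.lt_succ_of_le hm))⟩
  have hspec := Nat.find_spec hex
  refine ⟨Nat.find hex, hspec.1, fun k hk => ?_, fun m _ hm => hspec.2 m hm⟩
  obtain ⟨m, hm, hkm⟩ : ∃ m ≤ M, S k < S m := by
    have := Nat.find_min hex hk
    push Not at this
    exact this (hk.le.trans hspec.1)
  exact hkm.trans_le (hspec.2 m hm)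

section PrefixSum

variable {M : ℕ}

def prefixSum (a : Fin M → ℝ) (m : ℕ) : ℝ :=
  ∑ j ∈ univ.filter (fun j : Fin M => j.1 < m), a j

theorem prefixSum_zero (a : Fin M → ℝ) : prefixSum a 0 = 0 := by
  simp [prefixSum]

theorem prefixSum_sub_prefixSum (a : Fin M → ℝ) {k m : ℕ} (hkm : k ≤ m) :
    prefixSum a m - prefixSum a k =
      ∑ j ∈ univ.filter (fun j : Fin M => k ≤ j.1 ∧ j.1 < m), a j := by
  rw [sub_eq_iff_eq_add', prefixSum, prefixSum, ← sum_union]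
  · congr 1
    ext j
    simp only [mem_union, mem_filter, mem_univ, true_and]
    omega
  · rw [disjoint_filter]
    intros
    omega

theorem isFirstMaxOn_prefixSum_iff (a : Fin M → ℝ) {ℓ : ℕ} (hℓ : ℓ ≤ M) :
    IsFirstMaxOn (prefixSum a) M ℓ ↔
      (∀ k < ℓ, 0 < ∑ j ∈ univ.filter (fun j : Fin M => k ≤ j.1 ∧ j.1 < ℓ), a j) ∧
      (∀ k, ℓ ≤ k → k < M →
        ∑ j ∈ univ.filter (fun j : Fin M => ℓ ≤ j.1 ∧ j.1 ≤ k), a j ≤ 0) := by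
  simp only [IsFirstMaxOn, hℓ, true_and, ← sub_pos (b := prefixSum a _),
    ← sub_nonpos (a := prefixSum a _)]
  have hseg : ∀ k, ℓ ≤ k → ∑ j ∈ univ.filter (fun j : Fin M => ℓ ≤ j.1 ∧ j.1 ≤ k), a j =
      prefixSum a (k + 1) - prefixSum a ℓ := fun k hk => by
    rw [prefixSum_sub_prefixSum a (by omega)]
    exact sum_congr (filter_congr fun j _ => by omega) fun _ _ => rfl
  refine and_congr (forall₂_congr fun k hk => by rw [prefixSum_sub_prefixSum a hk.le]) ?_
  constructor
  · intro h k hℓk hkM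
    rw [hseg k hℓk]
    exact h (k + 1) (by omega) hkM
  · intro h m hℓm hmM
    obtain ⟨k, rfl⟩ := Nat.exists_eq_add_of_lt hℓm
    simpa only [hseg _ (Nat.le_add_right ℓ k)] using h (ℓ + k) (by omega) (by omega)

theorem IsFirstMaxOn.prefixSum_of_sign {a b : Fin M → ℝ} {ℓ : ℕ}
    (h : IsFirstMaxOn (prefixSum a) M ℓ)
    (hpos : ∀ s : Finset (Fin M), 0 < ∑ j ∈ s, a j → 0 < ∑ j ∈ s, b j)
    (hnonpos : ∀ s : Finset (Fin M), ∑ j ∈ s, a j ≤ 0 → ∑ j ∈ s, b j ≤ 0) :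
    IsFirstMaxOn (prefixSum b) M ℓ := by
  refine ⟨h.1, fun k hk => ?_, fun m hm _ => ?_⟩
  · have := hpos _ (prefixSum_sub_prefixSum a hk.le ▸ sub_pos.2 (h.2.1 k hk))
    rw [← prefixSum_sub_prefixSum b hk.le] at this
    linarith
  · have := hnonpos _ (prefixSum_sub_prefixSum a hm.le ▸ sub_nonpos.2 (h.2.2 m hm ‹_›))
    rw [← prefixSum_sub_prefixSum b hm.le] at this
    linarith

theorem prefixSum_comp_eq_sum_card_mul {N : ℕ} (ω : Fin M → Fin N) (g : Fin N → ℝ) (ℓ : ℕ) :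
    prefixSum (fun j => g (ω j)) ℓ =
      ∑ n, #(univ.filter fun i : Fin M => i.1 < ℓ ∧ ω i = n) * g n := by
  rw [prefixSum, ← sum_fiberwise_of_maps_to (fun j _ => mem_univ (ω j))]
  refine sum_congr rfl fun n _ => ?_
  rw [filter_filter, sum_congr rfl fun j hj => by rw [(mem_filter.1 hj).2.2], sum_const,
    nsmul_eq_mul]

theorem log_sup'_max_one_prod_eq {x : Fin M → ℝ} (hx : ∀ j, 0 < x j)
    (hne : (univ : Finset (Fin M)).Nonempty) {ℓ : ℕ} (hℓ : ℓ ≤ M)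
    (hmax : ∀ m ≤ M, prefixSum (fun j => log (x j)) m ≤ prefixSum (fun j => log (x j)) ℓ) :
    log (univ.sup' hne fun i => max 1 (∏ j ∈ univ.filter (fun j => j ≤ i), x j)) =
      prefixSum (fun j => log (x j)) ℓ := by
  set L := prefixSum fun j => log (x j)
  have hprod : ∀ i : Fin M, ∏ j ∈ univ.filter (fun j => j ≤ i), x j = exp (L (i + 1)) := by
    intro i
    simp only [L, prefixSum, exp_sum]
    refine prod_congr ?_ fun j _ => (exp_log (hx j)).symm
    exact filter_congr fun j _ => by rw [Fin.le_def, Nat.lt_succ_iff]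
  have hL0 : L 0 = 0 := prefixSum_zero _
  rw [← log_exp (L ℓ)]
  congr 1
  apply le_antisymm
  · refine sup'_le _ _ fun i _ => max_le ?_ ?_
    · exact one_le_exp (hL0 ▸ hmax 0 (Nat.zero_le M))
    · rw [hprod]
      exact exp_le_exp.2 (hmax _ (by omega))
  · rcases ℓ.eq_zero_or_pos with rfl | hℓ0
    · obtain ⟨i, -⟩ := hne
      rw [hL0, exp_zero]
      exact le_sup'_of_le _ (mem_univ i) (le_max_left _ _)
    · refine le_sup'_of_le _ (mem_univ ⟨ℓ - 1, by omega⟩) ((le_max_right _ _).trans' ?_)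
      rw [hprod, Nat.sub_add_cancel hℓ0]

end PrefixSum

theorem eventually_one_add_mul_pos (c : ℝ) : ∀ᶠ f in 𝓝 0, 0 < 1 + f * c := by
  have hcont : Continuous fun f : ℝ => 1 + f * c := by fun_prop
  exact hcont.continuousAt.eventually (lt_mem_nhds (by simp))

theorem eventually_sum_log_one_add_mul_pos {ι : Type*} (s : Finset ι) (c : ι → ℝ)
    (hs : 0 < ∑ j ∈ s, c j) : ∀ᶠ f in 𝓝[>] 0, 0 < ∑ j ∈ s, log (1 + f * c j) := by
  have hderiv : HasDerivAt (fun f => ∑ j ∈ s, log (1 + f * c j)) (∑ j ∈ s, c j) 0 := by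
    refine HasDerivAt.fun_sum fun j _ => ?_
    simpa using (((hasDerivAt_id (0 : ℝ)).mul_const (c j)).const_add 1).log (by simp)
  have hslope := (hasDerivAt_iff_tendsto_slope_zero.1 hderiv).mono_left
    (nhdsWithin_mono _ fun f (hf : 0 < f) => hf.ne')
  filter_upwards [hslope.eventually (lt_mem_nhds hs), self_mem_nhdsWithin] with f hf (hf0 : 0 < f)
  simp only [zero_add, zero_mul, add_zero, log_one, sum_const_zero, sub_zero, smul_eq_mul] at hf
  exact pos_of_mul_pos_right hf (inv_pos.2 hf0).le

theorem sum_log_one_add_mul_nonpos {ι : Type*} {s : Finset ι} {c : ι → ℝ} {f : ℝ} (hf : 0 ≤ f)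
    (hpos : ∀ j ∈ s, 0 < 1 + f * c j) (hs : ∑ j ∈ s, c j ≤ 0) :
    ∑ j ∈ s, log (1 + f * c j) ≤ 0 :=
  calc ∑ j ∈ s, log (1 + f * c j)
      ≤ ∑ j ∈ s, f * c j := sum_le_sum fun j hj => by linarith [log_le_sub_one_of_pos (hpos j hj)]
    _ = f * ∑ j ∈ s, c j := (mul_sum _ _ _).symm
    _ ≤ 0 := mul_nonpos_of_nonneg_of_nonpos hf hs

theorem eventually_log_sup'_max_one_prod_eq {M : ℕ} (c : Fin M → ℝ)
    (hne : (univ : Finset (Fin M)).Nonempty) :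
    ∀ᶠ f in 𝓝[>] 0, ∀ ℓ, IsFirstMaxOn (prefixSum c) M ℓ →
      log (univ.sup' hne fun i => max 1 (∏ j ∈ univ.filter (fun j => j ≤ i), (1 + f * c j))) =
        prefixSum (fun j => log (1 + f * c j)) ℓ := by
  have hfac : ∀ᶠ f in 𝓝[>] 0, ∀ j, 0 < 1 + f * c j :=
    eventually_all.2 fun j => nhdsWithin_le_nhds (eventually_one_add_mul_pos (c j))
  have hseg : ∀ᶠ f in 𝓝[>] 0, ∀ s : Finset (Fin M),
      0 < ∑ j ∈ s, c j → 0 < ∑ j ∈ s, log (1 + f * c j) := by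
    refine eventually_all.2 fun s => ?_
    by_cases hs : 0 < ∑ j ∈ s, c j
    · exact (eventually_sum_log_one_add_mul_pos s c hs).mono fun _ h _ => h
    · exact Eventually.of_forall fun _ h => absurd h hs
  filter_upwards [hfac, hseg, self_mem_nhdsWithin] with f hfac hseg (hf : 0 < f) ℓ hℓ
  have hℓ' := hℓ.prefixSum_of_sign hseg fun s hs =>
    sum_log_one_add_mul_nonpos hf.le (fun j _ => hfac j) hs
  exact log_sup'_max_one_prod_eq hfac hne hℓ.1 fun _ => hℓ'.le

theorem exists_pos_forall_of_eventually_nhdsGT {P : ℝ → Prop} (h : ∀ᶠ f in 𝓝[>] 0, P f) :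
    ∃ ε > 0, ∀ f, 0 < f → f < ε → P f := by
  obtain ⟨ε, hε, hsub⟩ := mem_nhdsGT_iff_exists_Ioo_subset.1 h
  exact ⟨ε, hε, fun f h0 h1 => hsub ⟨h0, h1⟩⟩

theorem sum_range_sum_filter_isFirstMaxOn {Ω : Type*} [Fintype Ω] (S : Ω → ℕ → ℝ) (M : ℕ)
    {top : Ω → ℕ} (htop : ∀ ω, IsFirstMaxOn (S ω) M (top ω)) (F : Ω → ℕ → ℝ) :
    ∑ ℓ ∈ range (M + 1), ∑ ω ∈ univ.filter (fun ω => IsFirstMaxOn (S ω) M ℓ), F ω ℓ =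
      ∑ ω, F ω (top ω) := by
  rw [← sum_fiberwise_of_maps_to (g := top) (t := range (M + 1))
    fun ω _ => mem_range.2 (Nat.lt_succ_of_le (htop ω).1)]
  refine sum_congr rfl fun ℓ _ => sum_congr ?_ fun ω hω => ?_
  · ext ω
    simp only [mem_filter, mem_univ, true_and]
    exact ⟨(htop ω).unique, fun h => h ▸ htop ω⟩
  · rw [(mem_filter.1 hω).2]

theorem stmt_13_general (N : ℕ) (t : Fin N → ℝ) (that : ℝ)
    (hthat_pos : 0 < that)
    (p : Fin N → ℝ)
    (M : ℕ) (hM : 1 ≤ M)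
    (R : Fin N → ℕ → ℝ)
    (hR : ∀ n : Fin N, ∀ ℓ, 1 ≤ ℓ → ℓ ≤ M → R n ℓ =
      ∑ ω ∈ Finset.univ.filter (fun ω : Fin M → Fin N =>
          (∀ k < ℓ, 0 < ∑ j ∈ Finset.univ.filter
              (fun j : Fin M => k ≤ j.1 ∧ j.1 < ℓ), t (ω j)) ∧
          (∀ k, ℓ ≤ k → k < M → (∑ j ∈ Finset.univ.filter
              (fun j : Fin M => ℓ ≤ j.1 ∧ j.1 ≤ k), t (ω j)) ≤ 0)),
        (∏ j, p (ω j)) *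
          ((Finset.univ.filter (fun i : Fin M => i.1 < ℓ ∧ ω i = n)).card : ℝ))
    (hR0 : ∀ n : Fin N, R n 0 = 0) :
    ∃ ε > 0, ∀ f : ℝ, 0 < f → f < ε →
      ∑ ω : Fin M → Fin N, (∏ j, p (ω j)) *
        Real.log ((Finset.univ : Finset (Fin M)).sup'
          (Finset.univ_nonempty_iff.mpr (Fin.pos_iff_nonempty.mp hM))
          (fun ℓ => max 1 (∏ j ∈ Finset.univ.filter (fun j : Fin M => j ≤ ℓ),
            (1 + f * t (ω j) / that))))
      = ∑ n, (∑ ℓ ∈ Finset.range (M + 1), R n ℓ) * Real.log (1 + f * t n / that) := by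
  choose top htop using fun ω : Fin M → Fin N => exists_isFirstMaxOn (prefixSum fun j => t (ω j)) M
  have htop_div : ∀ ω, IsFirstMaxOn (prefixSum fun j => t (ω j) / that) M (top ω) := fun ω =>
    (htop ω).prefixSum_of_sign
      (fun s hs => by rw [← sum_div]; exact div_pos hs hthat_pos)
      (fun s hs => by rw [← sum_div]; exact div_nonpos_of_nonpos_of_nonneg hs hthat_pos.le)
  obtain ⟨ε, hε, hrun⟩ := exists_pos_forall_of_eventually_nhdsGT <|
    eventually_all.2 fun ω : Fin M → Fin N =>
      eventually_log_sup'_max_one_prod_eq (fun j => t (ω j) / that)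
        (univ_nonempty_iff.mpr (Fin.pos_iff_nonempty.mp hM))
  have hRsum : ∀ n, ∑ ℓ ∈ range (M + 1), R n ℓ =
      ∑ ω, (∏ j, p (ω j)) * #(univ.filter fun i : Fin M => i.1 < top ω ∧ ω i = n) := fun n => by
    rw [← sum_range_sum_filter_isFirstMaxOn _ M htop
      fun ω ℓ => (∏ j, p (ω j)) * #(univ.filter fun i : Fin M => i.1 < ℓ ∧ ω i = n)]
    refine sum_congr rfl fun ℓ hℓ => ?_
    obtain rfl | hℓ0 := ℓ.eq_zero_or_pos
    · simp [hR0]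
    have hℓM : ℓ ≤ M := Nat.lt_succ_iff.1 (mem_range.1 hℓ)
    rw [hR n ℓ hℓ0 hℓM]
    exact sum_congr (filter_congr fun ω _ => (isFirstMaxOn_prefixSum_iff _ hℓM).symm) fun _ _ => rfl
  refine ⟨ε, hε, fun f hf0 hfε => ?_⟩
  calc _ = ∑ ω : Fin M → Fin N, (∏ j, p (ω j)) * ∑ n,
          #(univ.filter fun i : Fin M => i.1 < top ω ∧ ω i = n) * log (1 + f * (t n / that)) :=
        sum_congr rfl fun ω _ => by
          simp only [mul_div_assoc]
          rw [hrun f hf0 hfε ω (top ω) (htop_div ω),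
            prefixSum_comp_eq_sum_card_mul ω fun n => log (1 + f * (t n / that))]
    _ = _ := by
      simp only [hRsum, mul_div_assoc, mul_sum, sum_mul, mul_assoc]
      exact sum_comm

/-- For sufficiently small `f > 0`,
`E(R^(M)(f,·)) = ∑ₙ (∑_{ℓ=0}^M Rₙ^{(ℓ,M,N)})·log(1 + f·tₙ/t̂)`, where `Rₙ^{(0,M,N)} = 0`
and for `ℓ ∈ {1,…,M}`, `Rₙ^{(ℓ,M,N)}` sums `P({ω})·#{i ≤ ℓ : ωᵢ = n}` over the `ω`
whose run-up tops exactly after `ℓ` trades (indices here are 0-based: the 1-based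
conditions `∑_{j=k}^ℓ t_{ω_j} > 0` for `k = 1,…,ℓ` and `∑_{j=ℓ+1}^{k̃} t_{ω_j} ≤ 0`
for `k̃ = ℓ+1,…,M` become conditions on 0-based positions `j.1 ∈ {0,…,M-1}`). -/
theorem stmt_13 (N : ℕ) (hN : 1 ≤ N) (t : Fin N → ℝ) (ht : ∀ i, t i ≠ 0)
    (hneg : ∃ i, t i < 0) (that : ℝ)
    (hthat : IsGreatest {x : ℝ | ∃ i, t i < 0 ∧ x = |t i|} that)
    (hthat_pos : 0 < that)
    (p : Fin N → ℝ) (hp : ∀ i, 0 < p i) (hpsum : ∑ i, p i = 1)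
    (M : ℕ) (hM : 1 ≤ M)
    (R : Fin N → ℕ → ℝ)
    (hR : ∀ n : Fin N, ∀ ℓ, 1 ≤ ℓ → ℓ ≤ M → R n ℓ =
      ∑ ω ∈ Finset.univ.filter (fun ω : Fin M → Fin N =>
          (∀ k < ℓ, 0 < ∑ j ∈ Finset.univ.filter
              (fun j : Fin M => k ≤ j.1 ∧ j.1 < ℓ), t (ω j)) ∧
          (∀ k, ℓ ≤ k → k < M → (∑ j ∈ Finset.univ.filter
              (fun j : Fin M => ℓ ≤ j.1 ∧ j.1 ≤ k), t (ω j)) ≤ 0)),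
        (∏ j, p (ω j)) *
          ((Finset.univ.filter (fun i : Fin M => i.1 < ℓ ∧ ω i = n)).card : ℝ))
    (hR0 : ∀ n : Fin N, R n 0 = 0) :
    ∃ ε > 0, ∀ f : ℝ, 0 < f → f < ε →
      ∑ ω : Fin M → Fin N, (∏ j, p (ω j)) *
        Real.log ((Finset.univ : Finset (Fin M)).sup'
          (Finset.univ_nonempty_iff.mpr (Fin.pos_iff_nonempty.mp hM))
          (fun ℓ => max 1 (∏ j ∈ Finset.univ.filter (fun j : Fin M => j ≤ ℓ),
            (1 + f * t (ω j) / that))))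
      = ∑ n, (∑ ℓ ∈ Finset.range (M + 1), R n ℓ) * Real.log (1 + f * t n / that) :=
  stmt_13_general N t that hthat_pos p M hM R hR hR0
end
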